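/- Let d≥1, α=(α_1,…,α_d)∈(−1,∞)^d and n∈ℕ. Then the Laguerre polynomial addition formula holds: ∑_{μ∈ℕ^d, μ_1+…+μ_d=n} ∏_{i=1}^d L_{μ_i}^{α_i}(x_i) = L_n^{α_1+…+α_d+d−1}(x_1+…+x_d) for all x=(x_1,…,x_d)∈ℝ^d. Equivalently, with L̃_n^a:=L_n^a/√(L_n^a(0)) and L̃_μ^α(x):=∏_{i=1}^d L̃_{μ_i}^{α_i}(x_i), one has ∑_{|μ|_1=n} L̃_μ^α(0)·L̃_μ^α(x)=L_n^{|α|_1+d−1}(x_1+…+x_d). -/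

import Mathlib

open MeasureTheory Real Set Filter
open scoped ENNReal Topology BigOperators NNReal

noncomputable section

/-- The positive orthant `ℝ_+^d = (0,∞)^d`. -/
def Rplus (d : ℕ) : Set (EuclideanSpace ℝ (Fin d)) := {x | ∀ i, 0 < x i}

/-- The Laguerre polynomial `L_n^a(x) = ∑_{j=0}^n Γ(n+a+1)/(Γ(n-j+1)Γ(j+a+1)) (-x)^j/j!`. -/
def laguerreL (a : ℝ) (n : ℕ) (x : ℝ) : ℝ :=
  ∑ j ∈ Finset.range (n + 1),
    Real.Gamma (n + a + 1) / (Real.Gamma ((n : ℝ) - j + 1) * Real.Gamma (j + a + 1))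
      * (-x) ^ j / (Nat.factorial j)

/-- The one-dimensional Laguerre function
`φ_n^a(x) = (2 n!/Γ(n+a+1))^{1/2} x^{a+1/2} L_n^a(x²) e^{-x²/2}`. -/
def laguerreFun (a : ℝ) (n : ℕ) (x : ℝ) : ℝ :=
  Real.sqrt (2 * Nat.factorial n / Real.Gamma (n + a + 1))
    * x ^ (a + 1/2) * laguerreL a n (x ^ 2) * Real.exp (-x ^ 2 / 2)

/-- The multiple Laguerre function `φ_μ^α(x) = ∏_i φ_{μ_i}^{α_i}(x_i)`. -/
def laguerreFunD {d : ℕ} (α : Fin d → ℝ) (μ : Fin d → ℕ) (x : EuclideanSpace ℝ (Fin d)) : ℝ :=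
  ∏ i, laguerreFun (α i) (μ i) (x i)

/-- The spectral projection `P_n^α f = ∑_{|μ|₁ = n} ⟨f, φ_μ^α⟩ φ_μ^α`. -/
def laguerreProj {d : ℕ} (α : Fin d → ℝ) (n : ℕ) (f : EuclideanSpace ℝ (Fin d) → ℂ)
    (x : EuclideanSpace ℝ (Fin d)) : ℂ :=
  ∑ μ ∈ Finset.Nat.antidiagonalTuple d n,
    (∫ y in Rplus d, f y * (laguerreFunD α μ y : ℂ)) * (laguerreFunD α μ x : ℂ)

/-- The eigenvalue `4n + 2|α|₁ + 2d` of the Hermite–Laguerre operator `𝓛^α`. -/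
def eigenvalue (d : ℕ) (α : Fin d → ℝ) (n : ℕ) : ℝ := 4 * n + 2 * (∑ i, α i) + 2 * d

/-- `t ↦ (t)_+^λ` (vanishing for `t ≤ 0`). -/
def plusPow (lam t : ℝ) : ℝ := if 0 < t then t ^ lam else 0

/-- The Bochner–Riesz mean `S_R^λ(𝓛^α) f = ∑_n (1 - (4n+2|α|₁+2d)/R²)_+^λ P_n^α f`. -/
def bochnerRiesz {d : ℕ} (α : Fin d → ℝ) (lam R : ℝ) (f : EuclideanSpace ℝ (Fin d) → ℂ)
    (x : EuclideanSpace ℝ (Fin d)) : ℂ :=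
  ∑' n : ℕ, (plusPow lam (1 - eigenvalue d α n / R ^ 2) : ℂ) * laguerreProj α n f x

/-- The critical index `λ(p) = max{d(1/2 - 1/p) - 1/2, 0}`. -/
def lamIdx (d : ℕ) (p : ℝ) : ℝ := max (d * (1/2 - 1/p) - 1/2) 0

/-!
Write `L_n^a(x) = ∑_{k+m=n} multichoose (k+a+1) m · (-x)^k/k!`: with
`multichoose c m = c(c+1)⋯(c+m-1)/m!`, this is `Γ(n+a+1)/(Γ(k+a+1) m!)`. For two variables,
`∑_{p+q=n} L_p^a(x) L_q^b(y)` becomes a sum over `k+m+l+s = n`; grouping it by `(k+l, m+s)`,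
the sum over `m+s` collapses by the Chu–Vandermonde identity for `multichoose` and the sum
over `k+l` by the binomial theorem, leaving `L_n^{a+b+1}(x+y)`. Induction on `d` does the rest.
-/

open Finset Nat

namespace Ring

theorem multichoose_add {R : Type*} [CommRing R] [BinomialRing R] (r s : R) (k : ℕ) :
    multichoose (r + s) k = ∑ ij ∈ antidiagonal k, multichoose r ij.1 * multichoose s ij.2 := by
  -- Chu–Vandermonde for `choose` at `-r, -s`, since `choose (-r) k = (-1)^k • multichoose r k`
  have h := add_choose_eq k (Commute.all (-r) (-s))
  rw [← neg_add, choose_neg'] at h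
  simp only [choose_neg', smul_mul_smul_comm] at h
  rw [sum_congr rfl fun ij hij => by
    rw [← Int.negOnePow_add, ← Nat.cast_add, mem_antidiagonal.mp hij], ← smul_sum] at h
  exact (smul_left_cancel_iff _).mp h

theorem multichoose_eq_ascPochhammer_eval_div {K : Type*} [Field K] [CharZero K] [BinomialRing K]
    (c : K) (m : ℕ) : multichoose c m = (ascPochhammer K m).eval c / m ! := by
  rw [eq_div_iff (Nat.cast_ne_zero.2 m.factorial_ne_zero), mul_comm, ← nsmul_eq_mul,
    factorial_nsmul_multichoose_eq_ascPochhammer, Polynomial.ascPochhammer_smeval_eq_eval]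

end Ring

theorem Real.Gamma_add_nat_eq_ascPochhammer_mul {c : ℝ} (hc : ∀ k : ℕ, c ≠ -k) (m : ℕ) :
    Gamma (c + m) = (ascPochhammer ℝ m).eval c * Gamma c := by
  induction m with
  | zero => simp
  | succ m ih =>
    have hcm : c + m ≠ 0 := fun h => hc m (by linarith)
    rw [Nat.cast_succ, ← add_assoc, Gamma_add_one hcm, ih, ascPochhammer_succ_eval]
    ring

theorem add_pow_div_factorial {K : Type*} [Field K] [CharZero K] (x y : K) (n : ℕ) :
    (x + y) ^ n / n ! = ∑ ij ∈ antidiagonal n, x ^ ij.1 / ij.1 ! * (y ^ ij.2 / ij.2 !) := by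
  rw [(Commute.all x y).add_pow', sum_div]
  refine sum_congr rfl fun ij hij => ?_
  rw [← mem_antidiagonal.mp hij, nsmul_eq_mul, Nat.cast_add_choose]
  have := Nat.cast_ne_zero (R := K) |>.2 (ij.1 + ij.2).factorial_ne_zero
  field_simp

theorem Finset.sum_antidiagonal_sum_antidiagonal_comm {A M : Type*} [AddCommMonoid A]
    [HasAntidiagonal A] [AddCommMonoid M] (n : A) (f : A × A → A × A → M) :
    ∑ pq ∈ antidiagonal n, ∑ km ∈ antidiagonal pq.1, ∑ ls ∈ antidiagonal pq.2, f km ls =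
      ∑ KN ∈ antidiagonal n, ∑ kl ∈ antidiagonal KN.1, ∑ ms ∈ antidiagonal KN.2,
        f (kl.1, ms.1) (kl.2, ms.2) := by
  simp only [sum_sigma']
  apply sum_nbij' (fun ⟨_, u, v⟩ ↦ ⟨(u.1 + v.1, u.2 + v.2), (u.1, v.1), (u.2, v.2)⟩)
    (fun ⟨_, u, v⟩ ↦ ⟨(u.1 + v.1, u.2 + v.2), (u.1, v.1), (u.2, v.2)⟩) <;>
    aesop (add simp [add_assoc, add_comm, add_left_comm])

theorem Finset.Nat.sum_antidiagonalTuple_succ {M : Type*} [AddCommMonoid M] (k n : ℕ)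
    (f : (Fin (k + 1) → ℕ) → M) :
    ∑ μ ∈ antidiagonalTuple (k + 1) n, f μ =
      ∑ pq ∈ antidiagonal n, ∑ ν ∈ antidiagonalTuple k pq.2, f (Fin.cons pq.1 ν) := by
  rw [sum_sigma']
  refine sum_nbij' (fun μ : Fin (k + 1) → ℕ ↦ ⟨(μ 0, ∑ i : Fin k, μ i.succ), Fin.tail μ⟩)
    (fun q ↦ Fin.cons q.1.1 q.2) ?_ ?_ ?_ ?_ ?_ <;>
    simp_all [mem_antidiagonalTuple, Fin.sum_univ_succ, Fin.tail]

theorem laguerreL_eq_sum_antidiagonal {a : ℝ} (ha : -1 < a) (n : ℕ) (x : ℝ) :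
    laguerreL a n x =
      ∑ km ∈ antidiagonal n, (-x) ^ km.1 / km.1 ! * Ring.multichoose (km.1 + a + 1) km.2 := by
  rw [Finset.Nat.sum_antidiagonal_eq_sum_range_succ_mk]
  refine sum_congr rfl fun k hk => ?_
  have hkn : k ≤ n := Nat.lt_succ_iff.mp (mem_range.mp hk)
  have hc : 0 < (k : ℝ) + a + 1 := by linarith [(k.cast_nonneg : (0 : ℝ) ≤ k)]
  have hGamma_num :
      Gamma (n + a + 1) = (ascPochhammer ℝ (n - k)).eval (k + a + 1) * Gamma (k + a + 1) := by
    rw [← Real.Gamma_add_nat_eq_ascPochhammer_mul]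
    · push_cast [hkn]
      ring_nf
    · intro j hj
      linarith [(j.cast_nonneg : (0 : ℝ) ≤ j)]
  have hGamma_den : Gamma ((n : ℝ) - k + 1) = (n - k)! := by
    rw [← Real.Gamma_nat_eq_factorial]
    push_cast [hkn]
    ring_nf
  rw [hGamma_num, hGamma_den, Ring.multichoose_eq_ascPochhammer_eval_div]
  have := (Gamma_pos_of_pos hc).ne'
  field_simp

theorem sum_antidiagonal_laguerreL_mul_laguerreL {a b : ℝ} (ha : -1 < a) (hb : -1 < b) (n : ℕ)
    (x y : ℝ) :
    ∑ pq ∈ antidiagonal n, laguerreL a pq.1 x * laguerreL b pq.2 y =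
      laguerreL (a + b + 1) n (x + y) := by
  calc ∑ pq ∈ antidiagonal n, laguerreL a pq.1 x * laguerreL b pq.2 y
      = ∑ pq ∈ antidiagonal n, ∑ km ∈ antidiagonal pq.1, ∑ ls ∈ antidiagonal pq.2,
          (-x) ^ km.1 / km.1 ! * Ring.multichoose (km.1 + a + 1) km.2 *
            ((-y) ^ ls.1 / ls.1 ! * Ring.multichoose (ls.1 + b + 1) ls.2) := by
        simp only [laguerreL_eq_sum_antidiagonal ha, laguerreL_eq_sum_antidiagonal hb, sum_mul_sum]
    _ = ∑ KN ∈ antidiagonal n, ∑ kl ∈ antidiagonal KN.1,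
          (-x) ^ kl.1 / kl.1 ! * ((-y) ^ kl.2 / kl.2 !) * ∑ ms ∈ antidiagonal KN.2,
            Ring.multichoose (kl.1 + a + 1) ms.1 * Ring.multichoose (kl.2 + b + 1) ms.2 := by
        rw [sum_antidiagonal_sum_antidiagonal_comm]
        refine sum_congr rfl fun _ _ => sum_congr rfl fun _ _ => ?_
        rw [mul_sum]
        exact sum_congr rfl fun _ _ => by ring
    _ = ∑ KN ∈ antidiagonal n, (-(x + y)) ^ KN.1 / KN.1 ! *
          Ring.multichoose (KN.1 + (a + b + 1) + 1) KN.2 := by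
        refine sum_congr rfl fun KN _ => ?_
        rw [neg_add, add_pow_div_factorial, sum_mul]
        refine sum_congr rfl fun kl hkl => ?_
        rw [← Ring.multichoose_add, ← mem_antidiagonal.mp hkl]
        push_cast
        ring_nf
    _ = laguerreL (a + b + 1) n (x + y) :=
        (laguerreL_eq_sum_antidiagonal (by linarith) n (x + y)).symm

theorem sum_antidiagonalTuple_prod_laguerreL {d : ℕ} (α : Fin (d + 1) → ℝ)
    (hα : ∀ i, -1 < α i) (n : ℕ) (x : Fin (d + 1) → ℝ) :
    ∑ μ ∈ antidiagonalTuple (d + 1) n, ∏ i, laguerreL (α i) (μ i) (x i) =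
      laguerreL (∑ i, α i + d) n (∑ i, x i) := by
  induction d generalizing n with
  | zero => simp
  | succ d ih =>
    have hβ : -1 < ∑ i : Fin (d + 1), α i.succ + d := by
      have hpos : 0 < ∑ i : Fin (d + 1), (α i.succ + 1) :=
        sum_pos (fun i _ => by linarith [hα i.succ]) univ_nonempty
      rw [sum_add_distrib, sum_const, Finset.card_univ, Fintype.card_fin, nsmul_one] at hpos
      push_cast at hpos ⊢
      linarith
    calc ∑ μ ∈ antidiagonalTuple (d + 2) n, ∏ i, laguerreL (α i) (μ i) (x i)
        = ∑ pq ∈ antidiagonal n, laguerreL (α 0) pq.1 (x 0) *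
            laguerreL (∑ i : Fin (d + 1), α i.succ + d) pq.2 (∑ i : Fin (d + 1), x i.succ) := by
          rw [Finset.Nat.sum_antidiagonalTuple_succ]
          refine sum_congr rfl fun pq _ => ?_
          rw [← ih (fun i => α i.succ) (fun i => hα i.succ), mul_sum]
          simp only [Fin.prod_univ_succ, Fin.cons_zero, Fin.cons_succ]
      _ = laguerreL (∑ i, α i + (d + 1 : ℕ)) n (∑ i, x i) := by
          rw [sum_antidiagonal_laguerreL_mul_laguerreL (hα 0) hβ, Fin.sum_univ_succ α,
            Fin.sum_univ_succ x]
          push_cast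
          ring_nf

/-- (Laguerre polynomial addition formula.) For `d ≥ 1`, `α ∈ (-1,∞)^d`
and `n ∈ ℕ`,
`∑_{|μ|₁ = n} ∏_i L_{μ_i}^{α_i}(x_i) = L_n^{|α|₁+d-1}(x_1 + ⋯ + x_d)` for all `x ∈ ℝ^d`. -/
theorem statement17 {d : ℕ} (hd : 1 ≤ d) (α : Fin d → ℝ) (hα : ∀ i, -1 < α i)
    (n : ℕ) (x : Fin d → ℝ) :
    ∑ μ ∈ Finset.Nat.antidiagonalTuple d n, ∏ i, laguerreL (α i) (μ i) (x i)
      = laguerreL ((∑ i, α i) + d - 1) n (∑ i, x i) := by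
  obtain ⟨d, rfl⟩ := Nat.exists_eq_add_of_le' hd
  rw [sum_antidiagonalTuple_prod_laguerreL α hα]
  push_cast
  ring_nf
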